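/- arXiv:1807.06396 — 5 statements merged into one kernel-verified Lean document; each statement's English description precedes it below -/
import Mathlib

section
/- Let R be a commutative ring, ℓ a length function on R, and {M_α}_{α∈A} a family of R-modules. Then ℓ(⊕_{α∈A} M_α) = Σ_{α∈A} ℓ(M_α), where the (possibly infinite) sum in ℝ≥0 ∪ {∞} is the supremum of all finite partial sums. -/
open scoped ENNReal

universe u

structure LengthFunction (R : Type u) [CommRing R] where
  toFun : ∀ (M : Type u) [AddCommGroup M] [Module R M], ℝ≥0∞
  zero' : ∀ (M : Type u) [AddCommGroup M] [Module R M], Subsingleton M → toFun M = 0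
  additive : ∀ (M₁ M₂ M₃ : Type u) [AddCommGroup M₁] [Module R M₁]
      [AddCommGroup M₂] [Module R M₂] [AddCommGroup M₃] [Module R M₃]
      (f : M₁ →ₗ[R] M₂) (g : M₂ →ₗ[R] M₃),
      Function.Injective f → Function.Surjective g →
      LinearMap.range f = LinearMap.ker g →
      toFun M₂ = toFun M₁ + toFun M₃
  upperContinuous : ∀ (M : Type u) [AddCommGroup M] [Module R M],
      toFun M = ⨆ (N : Submodule R M) (_ : N.FG), toFun N

section Aux

variable {R : Type u} [CommRing R] (ℓ : LengthFunction R)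

lemma LF_zero (M : Type u) [AddCommGroup M] [Module R M] [Subsingleton M] :
    ℓ.toFun M = 0 := ℓ.zero' M ‹_›

lemma LF_congr {M N : Type u} [AddCommGroup M] [Module R M] [AddCommGroup N] [Module R N]
    (e : M ≃ₗ[R] N) : ℓ.toFun M = ℓ.toFun N := by
  have h := ℓ.additive M N PUnit.{u+1} e.toLinearMap 0 e.injective
    (fun x => ⟨0, Subsingleton.elim _ _⟩)
    (by rw [LinearMap.ker_zero, LinearEquiv.range])
  rw [h, LF_zero ℓ PUnit.{u+1}, add_zero]

lemma LF_prod (M N : Type u) [AddCommGroup M] [Module R M] [AddCommGroup N] [Module R N] :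
    ℓ.toFun (M × N) = ℓ.toFun M + ℓ.toFun N :=
  ℓ.additive M (M × N) N (LinearMap.inl R M N) (LinearMap.snd R M N)
    LinearMap.inl_injective LinearMap.snd_surjective (LinearMap.range_inl R M N)

lemma LF_mono {M : Type u} [AddCommGroup M] [Module R M] (N : Submodule R M) :
    ℓ.toFun N ≤ ℓ.toFun M := by
  have h := ℓ.additive N M (M ⧸ N) N.subtype N.mkQ N.injective_subtype N.mkQ_surjective
    (by rw [Submodule.range_subtype, Submodule.ker_mkQ])
  rw [h]; exact le_self_add

lemma LF_mono_le {M : Type u} [AddCommGroup M] [Module R M] {N N' : Submodule R M}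
    (h : N ≤ N') : ℓ.toFun N ≤ ℓ.toFun N' := by
  rw [LF_congr ℓ (Submodule.comapSubtypeEquivOfLe h).symm]
  exact LF_mono ℓ _

lemma LF_pi : ∀ (ι : Type u) [Fintype ι], ∀ (M : ι → Type u) [∀ i, AddCommGroup (M i)]
    [∀ i, Module R (M i)], ℓ.toFun (∀ i, M i) = ∑ i, ℓ.toFun (M i) := by
  intro ι hι
  refine Fintype.induction_empty_option
    (P := fun α _ => ∀ (M : α → Type u) [∀ i, AddCommGroup (M i)] [∀ i, Module R (M i)],
      ℓ.toFun (∀ i, M i) = ∑ i, ℓ.toFun (M i)) ?_ ?_ ?_ ι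
  · intro α β _ e ih M _ _
    letI : Fintype α := Fintype.ofEquiv β e.symm
    rw [← LF_congr ℓ (LinearEquiv.piCongrLeft R M e), ih]
    exact Fintype.sum_equiv e _ _ (fun a => rfl)
  · intro M _ _
    rw [LF_zero ℓ (∀ i, M i), Finset.univ_eq_empty, Finset.sum_empty]
  · intro α _ ih M _ _
    rw [LF_congr ℓ (LinearEquiv.piOptionEquivProd R), LF_prod, ih, Fintype.sum_option]

open DirectSum

variable {A : Type u} (M : A → Type u) [∀ a, AddCommGroup (M a)] [∀ a, Module R (M a)]

/-- inclusion of a finitely-supported direct sum into the full direct sum -/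
noncomputable def LFincl [DecidableEq A] (s : Finset A) : (⨁ a : ↥s, M ↑a) →ₗ[R] ⨁ a, M a :=
  DirectSum.toModule R ↥s _ (fun a => DirectSum.lof R A M ↑a)

noncomputable def LFproj [DecidableEq A] (s : Finset A) : (⨁ a, M a) →ₗ[R] ⨁ a : ↥s, M ↑a :=
  DirectSum.toModule R A _
    (fun a => if h : a ∈ s then DirectSum.lof R ↥s (fun b : ↥s => M ↑b) ⟨a, h⟩ else 0)

lemma LFincl_injective [DecidableEq A] (s : Finset A) : Function.Injective (LFincl (R := R) M s) := by
  classical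
  have h : (LFproj (R := R) M s).comp (LFincl (R := R) M s) = LinearMap.id := by
    apply DirectSum.linearMap_ext
    intro a
    ext m
    simp only [LinearMap.comp_apply, LFincl, LFproj, DirectSum.toModule_lof, LinearMap.id_apply,
      dif_pos a.2]
  exact Function.LeftInverse.injective (g := LFproj (R := R) M s)
    (fun x => by rw [← LinearMap.comp_apply, h, LinearMap.id_apply])

lemma LF_mem_range_incl [DecidableEq A] [∀ (a : A) (x : M a), Decidable (x ≠ 0)] {s : Finset A}
    (x : ⨁ a, M a) (h : ∀ a, x a ≠ 0 → a ∈ s) :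
    x ∈ LinearMap.range (LFincl (R := R) M s) := by
  rw [← DirectSum.sum_support_of x]
  apply Submodule.sum_mem
  intro a ha
  exact ⟨DirectSum.lof R ↥s (fun b : ↥s => M ↑b) ⟨a, h a (DFinsupp.mem_support_iff.mp ha)⟩ (x a),
    by rw [LFincl, DirectSum.toModule_lof, DirectSum.lof_eq_of]⟩

lemma LF_finset_sum (s : Finset A) :
    ℓ.toFun (⨁ a : ↥s, M ↑a) = ∑ a ∈ s, ℓ.toFun (M a) := by
  rw [LF_congr ℓ (DirectSum.linearEquivFunOnFintype R ↥s (fun a : ↥s => M ↑a)),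
    LF_pi ℓ ↥s (fun a : ↥s => M ↑a), Finset.sum_coe_sort s (fun a => ℓ.toFun (M a))]

lemma LF_finset_sum_eq_range [DecidableEq A] (s : Finset A) :
    ℓ.toFun (LinearMap.range (LFincl (R := R) M s)) = ∑ a ∈ s, ℓ.toFun (M a) := by
  rw [← LF_congr ℓ (LinearEquiv.ofInjective (LFincl (R := R) M s) (LFincl_injective M s)),
    LF_finset_sum]

end Aux

open DirectSum in
theorem length_directSum {R : Type u} [CommRing R] (ℓ : LengthFunction R)
    {A : Type u} (M : A → Type u) [∀ a, AddCommGroup (M a)] [∀ a, Module R (M a)] :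
    ℓ.toFun (DirectSum A M) = ∑' a, ℓ.toFun (M a) := by
  classical
  apply le_antisymm
  · rw [ℓ.upperContinuous (DirectSum A M)]
    apply iSup_le; intro N; apply iSup_le; intro hN
    obtain ⟨T, hT⟩ := hN
    set s : Finset A := T.sup (fun x => DFinsupp.support x) with hs
    have hsub : N ≤ LinearMap.range (LFincl (R := R) M s) := by
      rw [← hT, Submodule.span_le]
      intro x hx
      refine LF_mem_range_incl M x (fun a ha => ?_)
      exact Finset.le_sup (f := fun x => DFinsupp.support x) hx (DFinsupp.mem_support_iff.mpr ha)
    calc ℓ.toFun N ≤ ℓ.toFun (LinearMap.range (LFincl (R := R) M s)) := LF_mono_le ℓ hsub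
      _ = ∑ a ∈ s, ℓ.toFun (M a) := LF_finset_sum_eq_range ℓ M s
      _ ≤ ∑' a, ℓ.toFun (M a) := ENNReal.sum_le_tsum s
  · rw [ENNReal.tsum_eq_iSup_sum]
    apply iSup_le; intro s
    rw [← LF_finset_sum_eq_range ℓ M s]
    exact LF_mono ℓ _
end

section
/- Let R be a commutative ring, ℓ a length function on R, and α, β ∈ R with β not a zero-divisor. Then ℓ(R/αβR) = ℓ(R/αR) + ℓ(R/βR). -/
open scoped ENNReal

universe u

open scoped Pointwise

namespace LengthFunction

variable {R : Type u} [CommRing R] (ℓ : LengthFunction R)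

theorem toFun_eq_add_of_exact {M₁ M₂ M₃ : Type u} [AddCommGroup M₁] [Module R M₁]
    [AddCommGroup M₂] [Module R M₂] [AddCommGroup M₃] [Module R M₃]
    {f : M₁ →ₗ[R] M₂} {g : M₂ →ₗ[R] M₃} (hf : Function.Injective f)
    (hg : Function.Surjective g) (hfg : Function.Exact f g) :
    ℓ.toFun M₂ = ℓ.toFun M₁ + ℓ.toFun M₃ :=
  ℓ.additive _ _ _ f g hf hg (LinearMap.exact_iff.mp hfg).symm

/-- Multiplication by `β` gives the short exact sequence `0 → R/I → R/βI → R/βR → 0`. -/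
theorem toFun_quot_smul {β : R} (hβ : β ∈ nonZeroDivisors R) (I : Ideal R) :
    ℓ.toFun (R ⧸ β • I) = ℓ.toFun (R ⧸ I) + ℓ.toFun (R ⧸ Ideal.span {β}) :=
  ℓ.toFun_eq_add_of_exact (I.mulQuot_injective hβ) I.quotOfMul_surjective
    I.exact_mulQuot_quotOfMul

end LengthFunction

theorem Ideal.smul_span_singleton {R : Type*} [CommSemiring R] (α β : R) :
    β • Ideal.span {α} = Ideal.span {α * β} := by
  simp only [← Ideal.submodule_span_eq, Submodule.smul_span, Set.smul_set_singleton, smul_eq_mul,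
    mul_comm]

theorem length_quot_mul_eq {R : Type u} [CommRing R] (ℓ : LengthFunction R) (α β : R)
    (hβ : β ∈ nonZeroDivisors R) :
    ℓ.toFun (R ⧸ Ideal.span {α * β}) =
      ℓ.toFun (R ⧸ Ideal.span {α}) + ℓ.toFun (R ⧸ Ideal.span {β}) := by
  rw [← Ideal.smul_span_singleton]
  exact ℓ.toFun_quot_smul hβ _
end

section
/- Let D be an integral domain and ℓ a length function on D. Let Q be a P-primary ideal with ℓ(D/Q) < ∞, and let I be an ideal with Q ⊊ I and I ⊄ P. Then ℓ(D/I) = 0. -/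
open scoped ENNReal

universe u

theorem length_beyond_primary {D : Type u} [CommRing D] [IsDomain D] (ℓ : LengthFunction D)
    (P Q I : Ideal D) (hP : P.IsPrime) (hQ : Q.IsPrimary) (hrad : Q.radical = P)
    (hfin : ℓ.toFun (D ⧸ Q) < ⊤) (hQI : Q < I) (hIP : ¬ I ≤ P) :
    ℓ.toFun (D ⧸ I) = 0 := by
  obtain ⟨x, hxI, hxP⟩ := SetLike.not_le_iff_exists.mp hIP
  -- multiplication by x on D/Q
  set f : (D ⧸ Q) →ₗ[D] (D ⧸ Q) := LinearMap.lsmul D (D ⧸ Q) x with hf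
  have hinj : Function.Injective f := by
    rw [← LinearMap.ker_eq_bot]
    ext a
    simp only [LinearMap.mem_ker, Submodule.mem_bot]
    constructor
    · intro ha
      obtain ⟨a₀, rfl⟩ := Ideal.Quotient.mk_surjective a
      have : f (Ideal.Quotient.mk Q a₀) = Ideal.Quotient.mk Q (x * a₀) := by
        simp [hf, ← Submodule.Quotient.mk_smul, smul_eq_mul]
        rfl
      rw [this, Ideal.Quotient.eq_zero_iff_mem] at ha
      rcases (Ideal.isPrimary_iff.mp hQ).2 (mul_comm x a₀ ▸ ha) with h | h
      · rwa [Ideal.Quotient.eq_zero_iff_mem]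
      · exact absurd (hrad ▸ h) hxP
    · rintro rfl; simp
  set N : Submodule D (D ⧸ Q) := LinearMap.range f with hN
  have h1 : ℓ.toFun (D ⧸ Q) = ℓ.toFun (D ⧸ Q) + ℓ.toFun ((D ⧸ Q) ⧸ N) :=
    ℓ.additive _ _ _ f N.mkQ hinj (Submodule.mkQ_surjective N) (Submodule.ker_mkQ N).symm
  have h2 : ℓ.toFun ((D ⧸ Q) ⧸ N) = 0 := by
    have := h1
    rw [show ℓ.toFun (D ⧸ Q) + ℓ.toFun ((D ⧸ Q) ⧸ N)
        = ℓ.toFun (D ⧸ Q) + ℓ.toFun ((D ⧸ Q) ⧸ N) from rfl] at this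
    have h0 : ℓ.toFun (D ⧸ Q) + 0 = ℓ.toFun (D ⧸ Q) + ℓ.toFun ((D ⧸ Q) ⧸ N) := by
      rw [add_zero]; exact this
    exact ((ENNReal.add_right_inj hfin.ne).mp h0).symm
  -- map from (D ⧸ Q) ⧸ N onto D ⧸ I
  have hQleI : Q ≤ I := le_of_lt hQI
  set φ : (D ⧸ Q) →ₗ[D] (D ⧸ I) :=
    Submodule.mapQ Q I LinearMap.id (fun a ha => hQleI ha) with hφ
  have hφ_apply : ∀ a : D, φ (Ideal.Quotient.mk Q a) = Ideal.Quotient.mk I a := fun a => rfl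
  have hle : N ≤ LinearMap.ker φ := by
    rintro _ ⟨a, rfl⟩
    obtain ⟨a₀, rfl⟩ := Ideal.Quotient.mk_surjective a
    have hfa : f (Ideal.Quotient.mk Q a₀) = Ideal.Quotient.mk Q (x * a₀) := by
      simp [hf, ← Submodule.Quotient.mk_smul, smul_eq_mul]
      rfl
    rw [LinearMap.mem_ker, hfa, hφ_apply, Ideal.Quotient.eq_zero_iff_mem]
    exact I.mul_mem_right a₀ hxI
  set g : ((D ⧸ Q) ⧸ N) →ₗ[D] (D ⧸ I) := N.liftQ φ hle with hg
  have hgsurj : Function.Surjective g := by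
    intro b
    obtain ⟨b₀, rfl⟩ := Ideal.Quotient.mk_surjective b
    exact ⟨N.mkQ (Ideal.Quotient.mk Q b₀), by
      simp [hg, Submodule.liftQ_apply, hφ_apply]⟩
  have h3 : ℓ.toFun ((D ⧸ Q) ⧸ N) =
      ℓ.toFun (LinearMap.ker g) + ℓ.toFun (D ⧸ I) :=
    ℓ.additive _ _ _ (LinearMap.ker g).subtype g
      (Submodule.injective_subtype _) hgsurj (Submodule.range_subtype _)
  rw [h2] at h3
  exact (add_eq_zero.mp h3.symm).2
end

section
/- Let D be an integral domain, ℓ a length function on D, P' ⊆ P prime ideals of D, and Q a P'-primary ideal. Then ℓ(D/Q) = ℓ(D_P/QD_P), where D_P/QD_P is regarded as a D-module via the localization map. -/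
/-!
Elements outside `P ⊇ √Q` act injectively on `D ⧸ Q`, so `D ⧸ Q` embeds into its localization
`D_P ⧸ Q D_P`. The cokernel is the directed union, over `s ∉ P`, of the images of
`s⁻¹ (D ⧸ Q)`, each isomorphic to `(D ⧸ Q) ⧸ s (D ⧸ Q)`. When `ℓ (D ⧸ Q)` is finite,
additivity and `s (D ⧸ Q) ≅ D ⧸ Q` force these quotients to have length zero, and upper
continuity then kills the whole cokernel.
-/

open scoped ENNReal

universe u

namespace IsLocalizedModule

variable {R M M' : Type*} [CommRing R] [AddCommGroup M] [Module R M] [AddCommGroup M']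
  [Module R M'] (S : Submonoid R) (f : M →ₗ[R] M') [IsLocalizedModule S f]

noncomputable def mk'Coker (s : S) : M →ₗ[R] M' ⧸ LinearMap.range f where
  toFun m := Submodule.Quotient.mk (mk' f m s)
  map_add' m n := by rw [mk'_add, Submodule.Quotient.mk_add]
  map_smul' r m := by rw [mk'_smul, Submodule.Quotient.mk_smul, RingHom.id_apply]

theorem injective_of_isSMulRegular (hS : ∀ s ∈ S, IsSMulRegular M s) :
    Function.Injective f := fun m n h => by
  obtain ⟨c, hc⟩ := exists_of_eq (S := S) h
  exact hS c c.2 hc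

theorem ker_mk'Coker (hf : Function.Injective f) (s : S) :
    LinearMap.ker (mk'Coker S f s) = LinearMap.range (LinearMap.lsmul R M s) := by
  ext m
  simp only [mk'Coker, LinearMap.mem_ker, LinearMap.coe_mk, AddHom.coe_mk,
    Submodule.Quotient.mk_eq_zero, LinearMap.mem_range, LinearMap.lsmul_apply]
  refine exists_congr fun n => ?_
  rw [eq_comm, mk'_eq_iff, Submonoid.smul_def, ← map_smul, hf.eq_iff, eq_comm]

theorem directed_range_mk'Coker :
    Directed (· ≤ ·) fun s : S => LinearMap.range (mk'Coker S f s) := by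
  have hle (s t : S) :
      LinearMap.range (mk'Coker S f s) ≤ LinearMap.range (mk'Coker S f (t * s)) := by
    rintro _ ⟨m, rfl⟩
    exact ⟨(t : R) • m, congrArg Submodule.Quotient.mk (mk'_cancel_left f m t s)⟩
  exact fun s t => ⟨s * t, mul_comm s t ▸ hle s t, hle t s⟩

theorem exists_mem_range_mk'Coker (x : M' ⧸ LinearMap.range f) :
    ∃ s : S, x ∈ LinearMap.range (mk'Coker S f s) := by
  obtain ⟨y, rfl⟩ := Submodule.mkQ_surjective _ x
  obtain ⟨⟨m, s⟩, rfl⟩ := mk'_surjective S f y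
  exact ⟨s, m, rfl⟩

end IsLocalizedModule

theorem Ideal.IsPrimary.isSMulRegular_quotient {R : Type*} [CommRing R] {Q : Ideal R}
    (hQ : Q.IsPrimary) {s : R} (hs : s ∉ Q.radical) : IsSMulRegular (R ⧸ Q) s :=
  (isSMulRegular_quotient_iff_mem_of_smul_mem Q s).2 fun x hx =>
    ((Ideal.isPrimary_iff.1 hQ).2 (mul_comm s x ▸ hx)).resolve_right hs

namespace LengthFunction

variable {R : Type u} [CommRing R] (ℓ : LengthFunction R) {M N : Type u} [AddCommGroup M]
  [Module R M] [AddCommGroup N] [Module R N]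

theorem toFun_eq_add_quotient (K : Submodule R M) :
    ℓ.toFun M = ℓ.toFun K + ℓ.toFun (M ⧸ K) :=
  ℓ.additive K M (M ⧸ K) K.subtype K.mkQ K.injective_subtype K.mkQ_surjective
    (by rw [Submodule.range_subtype, Submodule.ker_mkQ])

theorem toFun_congr (e : M ≃ₗ[R] N) : ℓ.toFun M = ℓ.toFun N := by
  have h := ℓ.additive M N (N ⧸ (⊤ : Submodule R N)) e (⊤ : Submodule R N).mkQ e.injective
    (Submodule.mkQ_surjective _) (by rw [Submodule.ker_mkQ, LinearEquiv.range])
  rwa [ℓ.zero' _ (Submodule.Quotient.subsingleton_iff.2 rfl), add_zero, eq_comm] at h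

theorem toFun_le_of_injective (f : M →ₗ[R] N) (hf : Function.Injective f) :
    ℓ.toFun M ≤ ℓ.toFun N := by
  rw [ℓ.toFun_eq_add_quotient (LinearMap.range f),
    ← ℓ.toFun_congr (LinearEquiv.ofInjective f hf)]
  exact le_self_add

theorem toFun_quotient_range_eq_zero (f : M →ₗ[R] M) (hf : Function.Injective f)
    (hM : ℓ.toFun M ≠ ∞) : ℓ.toFun (M ⧸ LinearMap.range f) = 0 := by
  have h := ℓ.toFun_eq_add_quotient (LinearMap.range f)
  rw [← ℓ.toFun_congr (LinearEquiv.ofInjective f hf)] at h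
  exact (ENNReal.add_right_inj hM).1 (h.symm.trans (add_zero _).symm)

theorem toFun_eq_zero_of_directed {ι : Type*} [Nonempty ι] (K : ι → Submodule R M)
    (hK : Directed (· ≤ ·) K) (hcover : ∀ x, ∃ i, x ∈ K i)
    (hK0 : ∀ i, ℓ.toFun (K i) = 0) :
    ℓ.toFun M = 0 := by
  rw [ℓ.upperContinuous M]
  refine le_antisymm (iSup₂_le fun L hL => ?_) bot_le
  have hLsup : L ≤ sSup (Set.range K) := fun x _ => by
    obtain ⟨i, hi⟩ := hcover x
    exact Submodule.mem_sSup_of_mem (Set.mem_range_self i) hi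
  obtain ⟨_, ⟨i, rfl⟩, hLi⟩ :=
    (CompleteLattice.isCompactElement_iff_le_of_directed_sSup_le _ L).1
      ((Submodule.fg_iff_compact L).1 hL) _ (Set.range_nonempty K) hK.directedOn_range hLsup
  exact (ℓ.toFun_le_of_injective _ (Submodule.inclusion_injective hLi)).trans (hK0 i).le

theorem toFun_eq_of_isLocalizedModule {M' : Type u} [AddCommGroup M'] [Module R M']
    (S : Submonoid R) (f : M →ₗ[R] M') [IsLocalizedModule S f]
    (hS : ∀ s ∈ S, IsSMulRegular M s) : ℓ.toFun M' = ℓ.toFun M := by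
  have hf := IsLocalizedModule.injective_of_isSMulRegular S f hS
  rw [ℓ.toFun_eq_add_quotient (LinearMap.range f),
    ← ℓ.toFun_congr (LinearEquiv.ofInjective f hf)]
  by_cases hM : ℓ.toFun M = ∞
  · rw [hM, top_add]
  rw [ℓ.toFun_eq_zero_of_directed _ (IsLocalizedModule.directed_range_mk'Coker S f)
    (IsLocalizedModule.exists_mem_range_mk'Coker S f) fun s => ?_, add_zero]
  rw [← ℓ.toFun_congr (LinearMap.quotKerEquivRange _), IsLocalizedModule.ker_mk'Coker S f hf]
  exact ℓ.toFun_quotient_range_eq_zero _ (hS s s.2) hM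

end LengthFunction

theorem length_primary_localize_general {D : Type u} [CommRing D] (ℓ : LengthFunction D)
    (P' P : Ideal D) [P.IsPrime] (hle : P' ≤ P)
    (Q : Ideal D) (hQ : Q.IsPrimary) (hrad : Q.radical = P') :
    ℓ.toFun (D ⧸ Q) =
      ℓ.toFun (Localization.AtPrime P ⧸ Q.map (algebraMap D (Localization.AtPrime P))) := by
  have hreg (s : D) (hs : s ∈ P.primeCompl) : IsSMulRegular (D ⧸ Q) s :=
    hQ.isSMulRegular_quotient fun h => hs (hle (hrad ▸ h))
  have h := ℓ.toFun_eq_of_isLocalizedModule P.primeCompl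
    (Q.toLocalizedQuotient' (Localization.AtPrime P) P.primeCompl
      (Algebra.linearMap D (Localization.AtPrime P))) hreg
  rw [Ideal.localized'_eq_map] at h
  exact h.symm

theorem length_primary_localize {D : Type u} [CommRing D] [IsDomain D] (ℓ : LengthFunction D)
    (P' P : Ideal D) (hP' : P'.IsPrime) [P.IsPrime] (hle : P' ≤ P)
    (Q : Ideal D) (hQ : Q.IsPrimary) (hrad : Q.radical = P') :
    ℓ.toFun (D ⧸ Q) =
      ℓ.toFun (Localization.AtPrime P ⧸ Q.map (algebraMap D (Localization.AtPrime P))) :=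
  length_primary_localize_general ℓ P' P hle Q hQ hrad
end

section
/- Let D be an integral domain, T an overring of D (a ring between D and its quotient field K), and ℓ a length function on D. Then ℓ(D) = ∞ if and only if ℓ(T) = ∞. -/
open scoped ENNReal

universe u

lemma LengthFunction.mono {R : Type u} [CommRing R] (ℓ : LengthFunction R)
    {M₁ M₂ : Type u} [AddCommGroup M₁] [Module R M₁] [AddCommGroup M₂] [Module R M₂]
    (f : M₁ →ₗ[R] M₂) (hf : Function.Injective f) :
    ℓ.toFun M₁ ≤ ℓ.toFun M₂ := by
  have h := ℓ.additive M₁ M₂ (M₂ ⧸ LinearMap.range f) f (LinearMap.range f).mkQ hf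
    (Submodule.mkQ_surjective _) (Submodule.ker_mkQ _).symm
  rw [h]; exact le_self_add

set_option maxHeartbeats 1000000 in
set_option synthInstance.maxHeartbeats 400000 in
theorem length_overring_top_iff {D : Type u} [CommRing D] [IsDomain D]
    (T : Subalgebra D (FractionRing D)) (ℓ : LengthFunction D) :
    ℓ.toFun D = ⊤ ↔ ℓ.toFun T = ⊤ := by
  have hKinj : Function.Injective (algebraMap D (FractionRing D)) :=
    IsFractionRing.injective D (FractionRing D)
  have h1 : ℓ.toFun D ≤ ℓ.toFun T := by
    apply ℓ.mono (Algebra.linearMap D T)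
    have hcomp : (algebraMap D (FractionRing D)) = (T.val : T →+* FractionRing D).comp
        (algebraMap D T) := by
      ext x; simp
    intro x y h
    apply hKinj
    rw [hcomp]
    simp only [RingHom.comp_apply]
    exact congrArg _ h
  have h2 : ℓ.toFun T ≤ ℓ.toFun D := by
    rw [ℓ.upperContinuous T]
    apply iSup₂_le
    intro N hN
    -- N is a f.g. submodule of T; embed it into D
    have hN' : (N.map T.val.toLinearMap).FG := hN.map _
    obtain ⟨a, haS, ha⟩ := FractionalIdeal.isFractional_of_fg (S := nonZeroDivisors D)
      (P := FractionRing D) hN'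
    -- the map x ↦ a • (x : K), valued in range of algebraMap
    let g : N →ₗ[D] FractionRing D := a • (T.val.toLinearMap ∘ₗ N.subtype)
    have hg : ∀ x : N, g x ∈ LinearMap.range (Algebra.linearMap D (FractionRing D)) := by
      intro x
      obtain ⟨c, hc⟩ := ha ((x : T) : FractionRing D)
        ⟨(x : T), x.2, rfl⟩
      exact ⟨c, hc⟩
    have hginj : Function.Injective g := by
      intro x y h
      have ha0 : (algebraMap D (FractionRing D)) a ≠ 0 := by
        intro h0
        exact nonZeroDivisors.ne_zero haS (hKinj (by simpa using h0))
      have : (a • ((x : T) : FractionRing D)) = a • ((y : T) : FractionRing D) := h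
      rw [Algebra.smul_def, Algebra.smul_def] at this
      have := mul_left_cancel₀ ha0 this
      exact Subtype.ext (Subtype.ext this)
    let g' := g.codRestrict (LinearMap.range (Algebra.linearMap D (FractionRing D))) hg
    have hDinj : Function.Injective (Algebra.linearMap D (FractionRing D)) := hKinj
    let e := LinearEquiv.ofInjective (Algebra.linearMap D (FractionRing D)) hDinj
    refine ℓ.mono (e.symm.toLinearMap ∘ₗ g') (e.symm.injective.comp ?_)
    intro x y h
    exact hginj (congrArg Subtype.val h)
  constructor
  · intro h; exact top_le_iff.mp (h ▸ h1)
  · intro h; exact top_le_iff.mp (h ▸ h2)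
end
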